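/- arXiv:0709.3275 — 2 statements merged into one kernel-verified Lean document; each statement's English description precedes it below -/
import Mathlib

section
/- Let q ∈ ℂ with 0 < |q| < 1 and let θ_q be the Jacobi theta function. Then for every z ∈ ℂ∖{0}, the family (q^{j(j−1)/2} (−z)^j)_{j ∈ ℤ} is absolutely summable and its sum equals θ_q(z); that is, θ_q(z) = Σ_{j∈ℤ} q^{j(j−1)/2} (−z)^j. -/
/-!
Cauchy's argument. Gauss's `q`-binomial theorem
`∏_{k<N} (1 + x q^k) = ∑_{j ≤ N} [N, j]_q q^{j(j-1)/2} x^j`, taken at `N = 2n` and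
`x = -z q^{-n}`, gives the finite triple product
`(z; q)_n (q/z; q)_n = ∑_{|m| ≤ n} [2n, n+m]_q q^{m(m-1)/2} (-z)^m`.
For fixed `m`, `[2n, n+m]_q = (q; q)_{2n} / ((q; q)_{n+m} (q; q)_{n-m})` tends to `1 / (q; q)_∞`,
and these coefficients are bounded uniformly in `n` and `m`, so by dominated convergence the
right side tends to `(q; q)_∞⁻¹ ∑_m q^{m(m-1)/2} (-z)^m`, while the left side tends to
`(z; q)_∞ (q/z; q)_∞`.
-/

/-- The infinite q-Pochhammer symbol `(x; q)_∞ = ∏_{k=0}^{∞} (1 - x qᵏ)`. -/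
noncomputable def qPochInf (q x : ℂ) : ℂ :=
  ∏' k : ℕ, (1 - x * q ^ k)

/-- The Jacobi theta function `θ_q(z) = (q;q)_∞ (z;q)_∞ (q/z;q)_∞`. -/
noncomputable def thetaQ (q z : ℂ) : ℂ :=
  qPochInf q q * qPochInf q z * qPochInf q (q / z)

open Finset Filter Topology

section CommRing

variable {R : Type*} [CommRing R]

def qPoch (q x : R) (n : ℕ) : R := ∏ k ∈ range n, (1 - x * q ^ k)

lemma qPoch_succ (q x : R) (n : ℕ) : qPoch q x (n + 1) = qPoch q x n * (1 - x * q ^ n) :=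
  prod_range_succ _ _

def qBinom (q : R) : ℕ → ℕ → R
  | _, 0 => 1
  | 0, _ + 1 => 0
  | n + 1, k + 1 => q ^ (k + 1) * qBinom q n (k + 1) + qBinom q n k

variable (q : R)

lemma qBinom_zero_right (n : ℕ) : qBinom q n 0 = 1 := by cases n <;> rfl

lemma qBinom_succ_succ (n k : ℕ) :
    qBinom q (n + 1) (k + 1) = q ^ (k + 1) * qBinom q n (k + 1) + qBinom q n k := rfl

lemma qBinom_eq_zero_of_lt : ∀ {n k : ℕ}, n < k → qBinom q n k = 0
  | 0, _ + 1, _ => rfl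
  | n + 1, k + 1, h => by
    rw [qBinom_succ_succ, qBinom_eq_zero_of_lt (by omega), qBinom_eq_zero_of_lt (by omega),
      mul_zero, add_zero]

lemma qBinom_self (n : ℕ) : qBinom q n n = 1 := by
  induction n with
  | zero => rfl
  | succ n ih =>
    rw [qBinom_succ_succ, qBinom_eq_zero_of_lt q n.lt_succ_self, ih, mul_zero, zero_add]

theorem prod_one_add_mul_pow_eq_sum_qBinom (x : R) (n : ℕ) :
    ∏ k ∈ range n, (1 + x * q ^ k) =
      ∑ j ∈ range (n + 1), qBinom q n j * (q ^ j.choose 2 * x ^ j) := by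
  induction n generalizing x with
  | zero => simp [qBinom_zero_right]
  | succ n ih =>
    -- peel off the factor `1 + x` and use the induction hypothesis at `x * q`
    have hshift : ∏ k ∈ range n, (1 + x * q ^ (k + 1)) = ∏ k ∈ range n, (1 + x * q * q ^ k) := by
      simp only [pow_succ', mul_assoc]
    have hterm₁ (j : ℕ) : q ^ (j + 1) * qBinom q n (j + 1) * (q ^ (j + 1).choose 2 * x ^ (j + 1)) =
        qBinom q n (j + 1) * (q ^ (j + 1).choose 2 * (x * q) ^ (j + 1)) := by ring
    have hterm₂ (j : ℕ) : qBinom q n j * (q ^ (j + 1).choose 2 * x ^ (j + 1)) =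
        x * (qBinom q n j * (q ^ j.choose 2 * (x * q) ^ j)) := by
      rw [Nat.choose_succ_succ', Nat.choose_one_right]; ring
    have hlast := sum_range_succ' (fun j => qBinom q n j * (q ^ j.choose 2 * (x * q) ^ j)) (n + 1)
    rw [sum_range_succ, qBinom_eq_zero_of_lt q n.lt_succ_self] at hlast
    rw [prod_range_succ', hshift, ih, sum_range_succ' _ (n + 1)]
    simp only [qBinom_succ_succ, add_mul, sum_add_distrib, hterm₁, hterm₂, ← mul_sum]
    simp only [zero_mul, add_zero, Nat.choose_zero_succ, pow_zero, qBinom_zero_right,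
      mul_one] at hlast ⊢
    linear_combination hlast

lemma qBinom_add_mul_qPoch (a b : ℕ) :
    qBinom q (a + b) a * (qPoch q q a * qPoch q q b) = qPoch q q (a + b) := by
  induction a generalizing b with
  | zero => simp [qPoch, qBinom_zero_right]
  | succ a iha =>
    induction b with
    | zero => simp [qPoch, qBinom_self]
    | succ b ihb =>
      have h := iha (b + 1)
      rw [show a + 1 + (b + 1) = a + b + 1 + 1 by omega, qBinom_succ_succ,
        show a + b + 1 = a + 1 + b by omega]
      rw [show a + (b + 1) = a + 1 + b by omega] at h
      rw [qPoch_succ] at ihb h ⊢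
      rw [qPoch_succ q q b, qPoch_succ q q (a + 1 + b)]
      linear_combination (1 - q * q ^ b) * q ^ (a + 1) * ihb + (1 - q * q ^ a) * h

end CommRing

lemma sum_range_sub_eq_sum_Icc {M : Type*} [AddCommMonoid M] (f : ℤ → M) (n : ℕ) :
    ∑ j ∈ range (2 * n + 1), f (j - n) = ∑ m ∈ Icc (-n : ℤ) n, f m := by
  refine sum_nbij' (fun j => (j : ℤ) - n) (fun m => (n + m).toNat) ?_ ?_ ?_ ?_ (fun _ _ => rfl)
  all_goals intro j hj
  all_goals simp only [mem_range, mem_Icc] at hj ⊢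
  all_goals omega

lemma mul_sub_one_ediv_two_mul_two (m : ℤ) : m * (m - 1) / 2 * 2 = m * (m - 1) :=
  Int.ediv_mul_cancel m.even_mul_pred_self.two_dvd

lemma natCast_choose_two_mul_two (n : ℕ) : ((n.choose 2 : ℕ) : ℤ) * 2 = n * (n - 1) := by
  qify
  rw [Nat.cast_choose_two]
  ring

section Field

variable {K : Type*} [Field K]

/-- `m * (m - 1)` is even, so the integer division in the exponent is exact. -/
def thetaCoeff (q w : K) (m : ℤ) : K := q ^ (m * (m - 1) / 2) * w ^ m

lemma thetaCoeff_natCast (q w : K) (n : ℕ) : thetaCoeff q w n = q ^ n.choose 2 * w ^ n := by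
  have h : (n : ℤ) * (n - 1) / 2 = (n.choose 2 : ℕ) :=
    Int.ediv_eq_of_eq_mul_left two_ne_zero (natCast_choose_two_mul_two n).symm
  rw [thetaCoeff, h, zpow_natCast, zpow_natCast]

lemma thetaCoeff_neg_natCast (q w : K) (n : ℕ) :
    thetaCoeff q w (-n) = q ^ n.choose 2 * (q / w) ^ n := by
  have h : -(n : ℤ) * (-n - 1) / 2 = (n.choose 2 + n : ℕ) :=
    Int.ediv_eq_of_eq_mul_left two_ne_zero (by push_cast; linarith [natCast_choose_two_mul_two n])
  rw [thetaCoeff, h, zpow_natCast, zpow_neg, zpow_natCast, pow_add, div_pow]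
  ring

lemma thetaCoeff_add {q w : K} (hq : q ≠ 0) (hw : w ≠ 0) (a b : ℤ) :
    thetaCoeff q w (a + b) = thetaCoeff q w a * thetaCoeff q w b * q ^ (a * b) := by
  have h : (a + b) * (a + b - 1) / 2 = a * (a - 1) / 2 + b * (b - 1) / 2 + a * b := by
    linarith [mul_sub_one_ediv_two_mul_two (a + b), mul_sub_one_ediv_two_mul_two a,
      mul_sub_one_ediv_two_mul_two b]
  simp only [thetaCoeff, h, zpow_add₀ hq, zpow_add₀ hw]
  ring

variable {q z : K}

lemma prod_range_two_mul_eq_qPoch_mul_qPoch_div (hq : q ≠ 0) (hz : z ≠ 0) (n : ℕ) :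
    ∏ k ∈ range (2 * n), (1 + -z / q ^ n * q ^ k) =
      qPoch q z n * qPoch q (q / z) n / thetaCoeff q (-z) (-n) := by
  have hlow : ∏ k ∈ range n, (1 + -z / q ^ n * q ^ k) =
      (∏ j ∈ range n, (-z / q ^ (j + 1))) * qPoch q (q / z) n := by
    rw [← prod_range_reflect, qPoch, ← prod_mul_distrib]
    refine prod_congr rfl fun j hj => ?_
    have hpow : q ^ (n - 1 - j) * q ^ (j + 1) = q ^ n := by
      rw [← pow_add]; congr 1; have := mem_range.1 hj; omega
    field_simp
    linear_combination (-z) * hpow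
  have hhigh : ∏ k ∈ range n, (1 + -z / q ^ n * q ^ (n + k)) = qPoch q z n :=
    prod_congr rfl fun k _ => by rw [pow_add]; field_simp; ring
  have hfactor : ∏ j ∈ range n, (-z / q ^ (j + 1)) = (thetaCoeff q (-z) (-n))⁻¹ := by
    have hsum : ∑ j ∈ range n, j = n.choose 2 := by rw [sum_range_id, Nat.choose_two_right]
    calc ∏ j ∈ range n, (-z / q ^ (j + 1)) = (∏ j ∈ range n, (q ^ j * (q / -z)))⁻¹ := by
          rw [← prod_inv_distrib]
          refine prod_congr rfl fun j _ => ?_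
          rw [pow_succ]
          field_simp
      _ = _ := by
          rw [prod_mul_distrib, prod_pow_eq_pow_sum, hsum, prod_const, card_range,
            thetaCoeff_neg_natCast]
  rw [two_mul, prod_range_add, hlow, hhigh, hfactor]
  ring

theorem qPoch_mul_qPoch_div_eq_sum (hq : q ≠ 0) (hz : z ≠ 0) (n : ℕ) :
    qPoch q z n * qPoch q (q / z) n =
      ∑ m ∈ Icc (-n : ℤ) n, qBinom q (2 * n) (n + m).toNat * thetaCoeff q (-z) m := by
  have hθ : thetaCoeff q (-z) (-n) ≠ 0 :=
    mul_ne_zero (zpow_ne_zero _ hq) (zpow_ne_zero _ (neg_ne_zero.2 hz))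
  have hterm (j : ℕ) : q ^ j.choose 2 * (-z / q ^ n) ^ j =
      thetaCoeff q (-z) (j - n) / thetaCoeff q (-z) (-n) := by
    rw [eq_div_iff hθ, sub_eq_neg_add, thetaCoeff_add hq (neg_ne_zero.2 hz), thetaCoeff_natCast,
      show -(n : ℤ) * j = -((n * j : ℕ) : ℤ) by push_cast; ring, zpow_neg, zpow_natCast, pow_mul]
    field_simp
    rw [← mul_pow, neg_mul, div_mul_cancel₀ _ (pow_ne_zero n hq)]
  calc qPoch q z n * qPoch q (q / z) n
      = thetaCoeff q (-z) (-n) * ∏ k ∈ range (2 * n), (1 + -z / q ^ n * q ^ k) := by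
        rw [prod_range_two_mul_eq_qPoch_mul_qPoch_div hq hz]; field_simp
    _ = ∑ j ∈ range (2 * n + 1), qBinom q (2 * n) j * thetaCoeff q (-z) (j - n) := by
        rw [prod_one_add_mul_pow_eq_sum_qBinom, mul_sum]
        refine sum_congr rfl fun j _ => ?_
        rw [hterm]; field_simp
    _ = _ := by
        rw [← sum_range_sub_eq_sum_Icc]
        simp

end Field

lemma summable_norm_thetaCoeff {K : Type*} [NormedField K] {q : K} (hq : ‖q‖ < 1) (w : K) :
    Summable (fun m : ℤ => ‖thetaCoeff q w m‖) := by
  have hnat (w : K) : Summable (fun n : ℕ => ‖q ^ n.choose 2 * w ^ n‖) := by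
    refine summable_of_ratio_norm_eventually_le (r := 1 / 2) (by norm_num) ?_
    have hratio : Tendsto (fun n => ‖q‖ ^ n * ‖w‖) atTop (𝓝 0) := by
      simpa using (tendsto_pow_atTop_nhds_zero_of_lt_one (norm_nonneg q) hq).mul_const ‖w‖
    filter_upwards [hratio.eventually_le_const (by norm_num : (0 : ℝ) < 1 / 2)] with n hn
    have hstep : q ^ (n + 1).choose 2 * w ^ (n + 1) = q ^ n * w * (q ^ n.choose 2 * w ^ n) := by
      rw [Nat.choose_succ_succ', Nat.choose_one_right, pow_add]; ring
    rw [norm_norm, norm_norm, hstep, norm_mul, norm_mul, norm_pow]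
    exact mul_le_mul_of_nonneg_right hn (norm_nonneg _)
  exact .of_nat_of_neg (by simpa only [thetaCoeff_natCast] using hnat w)
    (by simpa only [thetaCoeff_neg_natCast] using hnat (q / w))

section Complex

variable {q : ℂ}

lemma hasProd_qPochInf (hq : ‖q‖ < 1) (x : ℂ) :
    HasProd (fun k => 1 - x * q ^ k) (qPochInf q x) := by
  have hsum : Summable (fun k : ℕ => -(x * q ^ k)) :=
    ((summable_geometric_of_norm_lt_one hq).mul_left x).neg
  simpa only [qPochInf, sub_eq_add_neg] using
    (Complex.multipliable_one_add_of_summable hsum).hasProd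

lemma tendsto_qPoch (hq : ‖q‖ < 1) (x : ℂ) : Tendsto (qPoch q x) atTop (𝓝 (qPochInf q x)) :=
  (hasProd_qPochInf hq x).tendsto_prod_nat

lemma qPochInf_ne_zero (hq : ‖q‖ < 1) {x : ℂ} (hx : ∀ k, x * q ^ k ≠ 1) : qPochInf q x ≠ 0 := by
  have hsum : Summable (fun k : ℕ => -(x * q ^ k)) :=
    ((summable_geometric_of_norm_lt_one hq).mul_left x).neg
  have hlog : Summable (fun k : ℕ => Complex.log (1 - x * q ^ k)) := by
    simpa only [sub_eq_add_neg] using Complex.summable_log_one_add_of_summable hsum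
  rw [qPochInf, ← Complex.cexp_tsum_eq_tprod (fun k => sub_ne_zero.2 (hx k).symm) hlog]
  exact Complex.exp_ne_zero _

lemma mul_pow_ne_one (hq : ‖q‖ < 1) (k : ℕ) : q * q ^ k ≠ 1 := by
  intro h
  have := congrArg norm h
  rw [← pow_succ', norm_pow, norm_one] at this
  exact (pow_lt_one₀ (norm_nonneg q) hq k.succ_ne_zero).ne this

lemma qPoch_self_ne_zero (hq : ‖q‖ < 1) (n : ℕ) : qPoch q q n ≠ 0 :=
  prod_ne_zero_iff.2 fun k _ => sub_ne_zero.2 (mul_pow_ne_one hq k).symm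

lemma qBinom_add_eq_qPoch_mul_inv (hq : ‖q‖ < 1) (a b : ℕ) :
    qBinom q (a + b) a = qPoch q q (a + b) * (qPoch q q a)⁻¹ * (qPoch q q b)⁻¹ := by
  rw [← qBinom_add_mul_qPoch q a b]
  field_simp [qPoch_self_ne_zero hq]

lemma tendsto_qBinom_add (hq : ‖q‖ < 1) {ι : Type*} {l : Filter ι} {a b : ι → ℕ}
    (ha : Tendsto a l atTop) (hb : Tendsto b l atTop) :
    Tendsto (fun i => qBinom q (a i + b i) (a i)) l (𝓝 (qPochInf q q)⁻¹) := by
  have hP := tendsto_qPoch hq q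
  have hne := qPochInf_ne_zero hq (mul_pow_ne_one hq)
  have hab : Tendsto (fun i => a i + b i) l atTop :=
    tendsto_atTop_mono (fun i => Nat.le_add_right _ _) ha
  have hlim := ((hP.comp hab).mul ((hP.comp ha).inv₀ hne)).mul ((hP.comp hb).inv₀ hne)
  rw [mul_inv_cancel₀ hne, one_mul] at hlim
  exact hlim.congr fun i => (qBinom_add_eq_qPoch_mul_inv hq _ _).symm

lemma exists_norm_qBinom_le (hq : ‖q‖ < 1) : ∃ B, ∀ n j, ‖qBinom q n j‖ ≤ B := by
  have hP := tendsto_qPoch hq q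
  obtain ⟨C, hC⟩ := isBounded_iff_forall_norm_le.1 (Metric.isBounded_range_of_tendsto _ hP)
  obtain ⟨D, hD⟩ := isBounded_iff_forall_norm_le.1
    (Metric.isBounded_range_of_tendsto _ (hP.inv₀ (qPochInf_ne_zero hq (mul_pow_ne_one hq))))
  have hC' (n : ℕ) : ‖qPoch q q n‖ ≤ C := hC _ ⟨n, rfl⟩
  have hD' (n : ℕ) : ‖(qPoch q q n)⁻¹‖ ≤ D := hD _ ⟨n, rfl⟩
  have hC0 : 0 ≤ C := (norm_nonneg _).trans (hC' 0)
  have hD0 : 0 ≤ D := (norm_nonneg _).trans (hD' 0)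
  refine ⟨C * D * D, fun n j => ?_⟩
  rcases le_or_gt j n with h | h
  · obtain ⟨b, rfl⟩ := Nat.exists_eq_add_of_le h
    rw [qBinom_add_eq_qPoch_mul_inv hq, norm_mul, norm_mul]
    gcongr
    exacts [hC' _, hD' _, hD' _]
  · rw [qBinom_eq_zero_of_lt q h, norm_zero]
    positivity

lemma tendsto_sum_qBinom_mul_thetaCoeff (hq : ‖q‖ < 1) (w : ℂ) :
    Tendsto (fun n : ℕ => ∑ m ∈ Icc (-n : ℤ) n, qBinom q (2 * n) (n + m).toNat * thetaCoeff q w m)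
      atTop (𝓝 ((qPochInf q q)⁻¹ * ∑' m, thetaCoeff q w m)) := by
  obtain ⟨B, hB⟩ := exists_norm_qBinom_le hq
  have hshift (k : ℤ) : Tendsto (fun n : ℕ => (n + k).toNat) atTop atTop :=
    tendsto_atTop_atTop.2 fun b => ⟨b + k.natAbs, fun n hn => by omega⟩
  rw [← tsum_mul_left]
  refine (tendsto_tsum_of_dominated_convergence
    (f := fun (n : ℕ) (m : ℤ) => ((Icc (-n : ℤ) n : Finset ℤ) : Set ℤ).indicator
      (fun m => qBinom q (2 * n) (n + m).toNat * thetaCoeff q w m) m)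
    ((summable_norm_thetaCoeff hq w).mul_left B) (fun m => ?_) (.of_forall fun n m => ?_)).congr
    fun n => (sum_eq_tsum_indicator _ _).symm
  · have hweight : Tendsto (fun n : ℕ => qBinom q (2 * n) (n + m).toNat) atTop
        (𝓝 (qPochInf q q)⁻¹) := by
      refine (tendsto_qBinom_add hq (hshift m) (hshift (-m))).congr' ?_
      filter_upwards [eventually_ge_atTop m.natAbs] with n hn
      congr 1
      omega
    refine (hweight.mul_const _).congr' ?_
    filter_upwards [eventually_ge_atTop m.natAbs] with n hn
    rw [Set.indicator_of_mem (by simp only [coe_Icc, Set.mem_Icc]; omega)]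
  · refine (norm_indicator_le_norm_self _ _).trans ?_
    rw [norm_mul]
    exact mul_le_mul_of_nonneg_right (hB _ _) (norm_nonneg _)

end Complex

/-- The Jacobi triple product expansion: for `z ≠ 0`, the family
`(q^{j(j-1)/2} (-z)^j)_{j ∈ ℤ}` is absolutely summable with sum `θ_q(z)`. -/
theorem thetaQ_laurent_expansion
    (q : ℂ) (hq0 : 0 < ‖q‖) (hq1 : ‖q‖ < 1)
    (z : ℂ) (hz : z ≠ 0) :
    Summable (fun j : ℤ => ‖q ^ (j * (j - 1) / 2) * (-z) ^ j‖) ∧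
      HasSum (fun j : ℤ => q ^ (j * (j - 1) / 2) * (-z) ^ j) (thetaQ q z) := by
  have hq : q ≠ 0 := norm_pos_iff.1 hq0
  have hsum : Summable (fun j : ℤ => ‖thetaCoeff q (-z) j‖) := summable_norm_thetaCoeff hq1 (-z)
  have hprod : qPochInf q z * qPochInf q (q / z) =
      (qPochInf q q)⁻¹ * ∑' j, thetaCoeff q (-z) j := by
    refine tendsto_nhds_unique ((tendsto_qPoch hq1 z).mul (tendsto_qPoch hq1 (q / z))) ?_
    simpa only [qPoch_mul_qPoch_div_eq_sum hq hz] using tendsto_sum_qBinom_mul_thetaCoeff hq1 (-z)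
  have htheta : thetaQ q z = ∑' j, thetaCoeff q (-z) j := by
    rw [thetaQ, mul_assoc, hprod,
      mul_inv_cancel_left₀ (qPochInf_ne_zero hq1 (mul_pow_ne_one hq1))]
  exact ⟨hsum, htheta ▸ hsum.of_norm.hasSum⟩
end

section
/- Let q ∈ ℂ with 0 < |q| < 1, let a, b, c ∈ ℂ∖{0}, and define Ψ(z) = θ_q(b)θ_q(c/a)θ_q(az)θ_q((bq/c)z) − θ_q(c/b)θ_q(a)θ_q((aq/c)z)θ_q(bz) for z ∈ ℂ∖{0}. Then Ψ vanishes on q^ℤ and on (c/(abq))·q^ℤ; that is, Ψ(qⁿ) = 0 and Ψ((c/(abq))·qⁿ) = 0 for every n ∈ ℤ. -/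
/-- The function
`Ψ(z) = θ_q(b)θ_q(c/a)θ_q(az)θ_q((bq/c)z) − θ_q(c/b)θ_q(a)θ_q((aq/c)z)θ_q(bz)`. -/
noncomputable def PsiAux (q a b c z : ℂ) : ℂ :=
  thetaQ q b * thetaQ q (c / a) * thetaQ q (a * z) * thetaQ q (b * q / c * z)
    - thetaQ q (c / b) * thetaQ q a * thetaQ q (a * q / c * z) * thetaQ q (b * z)

/-!
Peeling off the first factor of `(z;q)_∞` gives `θ_q(qz) = -z⁻¹ θ_q(z)`, and `θ_q(q/z) = θ_q(z)`
is built into the definition; together they give `θ_q(z⁻¹) = -z⁻¹ θ_q(z)`. Consequently `Ψ`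
picks up the same nonzero factor `c/(abqz²)` under both `z ↦ qz` and `z ↦ c/(abqz)`, so its zero
set is stable under both maps. Since `Ψ(1) = 0` by `θ_q(q/z) = θ_q(z)` alone, `Ψ` vanishes on
`q^ℤ`, and by the reflection also on `(c/(abq)) q^ℤ`.
-/

lemma apply_zpow_mul_iff {G₀ : Type*} [GroupWithZero G₀] {P : G₀ → Prop} {q : G₀} (hq : q ≠ 0)
    (hP : ∀ z, P (q * z) ↔ P z) (n : ℤ) (z : G₀) : P (q ^ n * z) ↔ P z := by
  induction n using Int.induction_on generalizing z with
  | zero => simp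
  | succ n ih => rw [zpow_add_one₀ hq, mul_assoc, ih, hP]
  | pred n ih =>
    rw [zpow_sub_one₀ hq, mul_assoc, ih, ← hP, mul_inv_cancel_left₀ hq]

lemma multipliable_one_sub_mul_pow {q : ℂ} (hq : ‖q‖ < 1) (x : ℂ) :
    Multipliable fun k : ℕ ↦ 1 - x * q ^ k := by
  have hsum : Summable fun k : ℕ ↦ ‖-(x * q ^ k)‖ := by
    simpa using (summable_geometric_of_lt_one (norm_nonneg q) hq).mul_left ‖x‖
  simpa only [sub_eq_add_neg] using Complex.multipliable_one_add_of_summable hsum.of_norm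

section Theta

variable {q : ℂ}

lemma qPochInf_eq_one_sub_mul (hq : ‖q‖ < 1) (x : ℂ) :
    qPochInf q x = (1 - x) * qPochInf q (q * x) := by
  have htail : Multipliable fun k : ℕ ↦ 1 - x * q ^ (k + 1) :=
    (multipliable_one_sub_mul_pow hq (q * x)).congr fun k ↦ by ring
  rw [qPochInf, tprod_eq_zero_mul' (f := fun k ↦ 1 - x * q ^ k) htail, pow_zero, mul_one, qPochInf]
  congr 1
  exact tprod_congr fun k ↦ by ring

lemma thetaQ_div (hq : q ≠ 0) (z : ℂ) : thetaQ q (q / z) = thetaQ q z := by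
  rw [thetaQ, thetaQ, div_div_cancel₀ hq]
  ring

lemma thetaQ_mul (hq : q ≠ 0) (hq1 : ‖q‖ < 1) {z : ℂ} (hz : z ≠ 0) :
    thetaQ q (q * z) = -z⁻¹ * thetaQ q z := by
  rw [thetaQ, thetaQ, div_mul_cancel_left₀ hq, div_eq_mul_inv,
    qPochInf_eq_one_sub_mul hq1 z, qPochInf_eq_one_sub_mul hq1 z⁻¹]
  field_simp
  ring

lemma thetaQ_inv (hq : q ≠ 0) (hq1 : ‖q‖ < 1) {z : ℂ} (hz : z ≠ 0) :
    thetaQ q z⁻¹ = -z⁻¹ * thetaQ q z := by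
  rw [← thetaQ_mul hq hq1 hz, ← thetaQ_div hq (q * z), div_mul_cancel_left₀ hq]

end Theta

section Psi

variable {q a b c : ℂ}

lemma PsiAux_one (hq : q ≠ 0) : PsiAux q a b c 1 = 0 := by
  have hb : thetaQ q (b * q / c) = thetaQ q (c / b) := by
    rw [← thetaQ_div hq (c / b), div_div_eq_mul_div, mul_comm q b]
  have ha : thetaQ q (a * q / c) = thetaQ q (c / a) := by
    rw [← thetaQ_div hq (c / a), div_div_eq_mul_div, mul_comm q a]
  rw [PsiAux, mul_one, mul_one, mul_one, mul_one, hb, ha]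
  ring

lemma PsiAux_mul (hq : q ≠ 0) (hq1 : ‖q‖ < 1) (ha : a ≠ 0) (hb : b ≠ 0) (hc : c ≠ 0)
    {z : ℂ} (hz : z ≠ 0) :
    PsiAux q a b c (q * z) = c / (a * b * q * z ^ 2) * PsiAux q a b c z := by
  rw [PsiAux, PsiAux, mul_left_comm a, mul_left_comm (b * q / c), mul_left_comm (a * q / c),
    mul_left_comm b, thetaQ_mul hq hq1 (by positivity), thetaQ_mul hq hq1 (by positivity),
    thetaQ_mul hq hq1 (by positivity), thetaQ_mul hq hq1 (by positivity)]
  field_simp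

lemma PsiAux_div (hq : q ≠ 0) (hq1 : ‖q‖ < 1) (ha : a ≠ 0) (hb : b ≠ 0) (hc : c ≠ 0)
    {z : ℂ} (hz : z ≠ 0) :
    PsiAux q a b c (c / (a * b * q) / z) = c / (a * b * q * z ^ 2) * PsiAux q a b c z := by
  have h₁ : a * (c / (a * b * q) / z) = (b * q / c * z)⁻¹ := by field_simp
  have h₂ : b * q / c * (c / (a * b * q) / z) = (a * z)⁻¹ := by field_simp
  have h₃ : a * q / c * (c / (a * b * q) / z) = (b * z)⁻¹ := by field_simp
  have h₄ : b * (c / (a * b * q) / z) = (a * q / c * z)⁻¹ := by field_simp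
  rw [PsiAux, PsiAux, h₁, h₂, h₃, h₄, thetaQ_inv hq hq1 (by positivity),
    thetaQ_inv hq hq1 (by positivity), thetaQ_inv hq hq1 (by positivity),
    thetaQ_inv hq hq1 (by positivity)]
  field_simp

lemma PsiAux_mul_eq_zero_iff (hq : q ≠ 0) (hq1 : ‖q‖ < 1) (ha : a ≠ 0) (hb : b ≠ 0)
    (hc : c ≠ 0) (z : ℂ) : PsiAux q a b c (q * z) = 0 ↔ PsiAux q a b c z = 0 := by
  rcases eq_or_ne z 0 with rfl | hz
  · rw [mul_zero]
  · rw [PsiAux_mul hq hq1 ha hb hc hz, mul_eq_zero, or_iff_right (by positivity)]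

end Psi

/-- `Ψ` vanishes on `q^ℤ` and on `(c/(abq)) q^ℤ`. -/
theorem PsiAux_vanishes
    (q : ℂ) (hq0 : 0 < ‖q‖) (hq1 : ‖q‖ < 1)
    (a b c : ℂ) (ha : a ≠ 0) (hb : b ≠ 0) (hc : c ≠ 0) (n : ℤ) :
    PsiAux q a b c (q ^ n) = 0 ∧ PsiAux q a b c (c / (a * b * q) * q ^ n) = 0 := by
  have hq : q ≠ 0 := norm_pos_iff.mp hq0
  have hpow (m : ℤ) : PsiAux q a b c (q ^ m) = 0 := by
    simpa using (apply_zpow_mul_iff (P := (PsiAux q a b c · = 0)) hq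
      (PsiAux_mul_eq_zero_iff hq hq1 ha hb hc) m 1).mpr (PsiAux_one hq)
  refine ⟨hpow n, ?_⟩
  rw [← div_inv_eq_mul, ← zpow_neg, PsiAux_div hq hq1 ha hb hc (zpow_ne_zero _ hq), hpow,
    mul_zero]
end
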